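/- Let T ∈ (0, ∞]. Suppose u : ℝ³ × [0, T) → ℝ³ is jointly C² and satisfies the pressureless transport equation ∂ₜu + (u·∇)u = 0 at every point of ℝ³ × [0, T). If there exist a point ξ₀ ∈ ℝ³, a nonzero vector w ∈ ℝ³ and a real number ℓ < 0 such that the spatial Jacobian matrix ∇u(ξ₀, 0) satisfies ∇u(ξ₀, 0) w = ℓ w, then T ≤ −1/ℓ; in particular T < +∞. -/

import Mathlib

/-- The spatial Jacobian matrix `(∂ⱼuᵢ(x,t))ᵢⱼ` of a time-dependent vector field
`u : ℝ³ × ℝ → ℝ³`. -/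
noncomputable def spatialJacobian (u : (Fin 3 → ℝ) × ℝ → Fin 3 → ℝ)
    (x : Fin 3 → ℝ) (t : ℝ) : Matrix (Fin 3) (Fin 3) ℝ :=
  Matrix.of fun i j => fderiv ℝ (fun y => u (y, t) i) x (Pi.single j 1)

/-! Along the characteristic `t ↦ x + t • u (x, 0)` the velocity stays equal to `u (x, 0)`:
the defect `g t = u (x + t • u (x, 0), t) - u (x, 0)` vanishes at `t = 0` and the transport
equation gives `‖g'‖ ≤ K ‖g‖`, so `g = 0` by Grönwall. Differentiating the identity
`u (x + t • u (x, 0), t) = u (x, 0)` at `ξ₀` in the direction `w` gives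
`∇u(·, t) ((1 + t ℓ) • w) = ℓ • w`, and at `t = -1/ℓ` the left side vanishes although `ℓ • w ≠ 0`. -/

open Set Filter Topology

section Jacobian

variable {ι κ : Type*} [Fintype ι] [DecidableEq ι]

lemma HasFDerivAt.toMatrix'_eq {f : (ι → ℝ) → κ → ℝ} {A : (ι → ℝ) →L[ℝ] κ → ℝ} {x : ι → ℝ}
    (h : HasFDerivAt f A x) :
    LinearMap.toMatrix' (A : (ι → ℝ) →ₗ[ℝ] κ → ℝ) =
      Matrix.of fun i j => fderiv ℝ (fun y => f y i) x (Pi.single j 1) := by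
  ext i j
  rw [LinearMap.toMatrix'_apply, Matrix.of_apply, (hasFDerivAt_pi'.mp h i).fderiv]
  rfl

lemma deriv_add_sum_mul_fderiv_eq [Fintype κ] {u : (ι → ℝ) × ℝ → κ → ℝ}
    {L : (ι → ℝ) × ℝ →L[ℝ] κ → ℝ} {x : ι → ℝ} {t : ℝ} (hL : HasFDerivAt u L (x, t))
    (c : ι → ℝ) (i : κ) :
    deriv (fun s => u (x, s) i) t
      + ∑ j, c j * fderiv ℝ (fun y => u (y, t) i) x (Pi.single j 1) = L (c, 1) i := by
  have htime : HasDerivAt (fun s => u (x, s)) (L (0, 1)) t :=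
    hL.comp_hasDerivAt t ((hasDerivAt_const t x).prodMk (hasDerivAt_id t))
  have hspace : HasFDerivAt (fun y => u (y, t)) (L.comp (.inl ℝ _ ℝ)) x :=
    hL.comp x (hasFDerivAt_prodMk_left x t)
  have hsum := congrFun (LinearMap.toMatrix'_mulVec (L.comp (.inl ℝ _ ℝ)).toLinearMap c) i
  rw [hspace.toMatrix'_eq] at hsum
  simp only [Matrix.mulVec, dotProduct, Matrix.of_apply] at hsum
  rw [(hasDerivAt_pi.mp htime i).deriv]
  simp_rw [mul_comm (c _), hsum]
  simp [← Pi.add_apply, ← map_add]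

end Jacobian

section Transport

variable {E : Type*} [NormedAddCommGroup E] [NormedSpace ℝ E]

lemma DifferentiableWithinAt.differentiableAt_slice {F : Type*} [NormedAddCommGroup F]
    [NormedSpace ℝ F] {u : E × ℝ → F} {I : Set ℝ} {x : E} {t : ℝ}
    (h : DifferentiableWithinAt ℝ u (univ ×ˢ I) (x, t)) (ht : t ∈ I) :
    DifferentiableAt ℝ (fun y => u (y, t)) x := by
  rw [← differentiableWithinAt_univ]
  exact h.comp x (differentiableAt_id.prodMk (differentiableAt_const t)).differentiableWithinAt
    fun _ _ => mk_mem_prod trivial ht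

lemma HasFDerivAt.apply_eq_fderiv_of_comp_add_smul_eq {a b : E → E} {A : E →L[ℝ] E} {ξ : E}
    {t : ℝ} (hflow : ∀ x, b (x + t • a x) = a x) (ha : HasFDerivAt a A ξ)
    (hb : DifferentiableAt ℝ b (ξ + t • a ξ)) (w : E) :
    A w = fderiv ℝ b (ξ + t • a ξ) (w + t • A w) := by
  have hcomp := hb.hasFDerivAt.comp ξ ((hasFDerivAt_id ξ).add (ha.const_smul t))
  rw [show b ∘ (id + t • a) = a from funext hflow] at hcomp
  exact DFunLike.congr_fun (ha.unique hcomp) w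

variable {u : E × ℝ → E} {τ : ℝ}

lemma fderivWithin_apply_eq_zero_of_forall_mem_Ioo (hτ : 0 < τ)
    (hu : ContDiffOn ℝ 1 u (univ ×ˢ Ico 0 τ))
    (hpde : ∀ p ∈ univ ×ˢ Ioo 0 τ, fderiv ℝ u p (u p, 1) = 0) :
    ∀ p ∈ univ ×ˢ Ico 0 τ, fderivWithin ℝ u (univ ×ˢ Ico 0 τ) p (u p, 1) = 0 := by
  refine EqOn.of_subset_closure (s := univ ×ˢ Ioo 0 τ) (fun p hp => ?_) ?_ continuousOn_const
    (prod_mono subset_rfl Ioo_subset_Ico_self) ?_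
  · rw [fderivWithin_of_mem_nhds (prod_mem_nhds univ_mem (Ico_mem_nhds hp.2.1 hp.2.2))]
    exact hpde p hp
  · exact (hu.continuousOn_fderivWithin (uniqueDiffOn_univ.prod (uniqueDiffOn_Ico 0 τ))
      le_rfl).clm_apply (hu.continuousOn.prodMk continuousOn_const)
  · rw [closure_prod_eq, closure_univ, closure_Ioo hτ.ne]
    exact prod_mono subset_rfl Ico_subset_Icc_self

theorem apply_characteristic_eq_of_transport (hu : ContDiffOn ℝ 1 u (univ ×ˢ Ico 0 τ))
    (hpde : ∀ p ∈ univ ×ˢ Ioo 0 τ, fderiv ℝ u p (u p, 1) = 0) (x : E) {t : ℝ}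
    (ht : t ∈ Ico 0 τ) :
    u (x + t • u (x, 0), t) = u (x, 0) := by
  have hτ : 0 < τ := ht.1.trans_lt ht.2
  set s := univ ×ˢ Ico (0 : ℝ) τ
  set v := u (x, 0)
  set φ : ℝ → E × ℝ := fun r => (x + r • v, r)
  have hφ : ∀ r, HasDerivAt φ (v, 1) r := fun r => by
    simpa using (((hasDerivAt_id r).smul_const v).const_add x).prodMk (hasDerivAt_id r)
  have hφs : ∀ r ∈ Icc 0 t, φ r ∈ s := fun r hr => ⟨trivial, hr.1, hr.2.trans_lt ht.2⟩
  obtain ⟨K, hK⟩ := (isCompact_Icc.image (by fun_prop : Continuous φ)).exists_bound_of_continuousOn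
    ((hu.continuousOn_fderivWithin (uniqueDiffOn_univ.prod (uniqueDiffOn_Ico 0 τ)) le_rfl).mono
      (image_subset_iff.mpr hφs))
  have hpde' := fderivWithin_apply_eq_zero_of_forall_mem_Ioo hτ hu hpde
  have hderiv : ∀ r ∈ Ico 0 t, HasDerivWithinAt (fun r => u (φ r) - v)
      (fderivWithin ℝ u s (φ r) (v - u (φ r), 0)) (Ici r) r := by
    intro r hr
    have hr' : r ∈ Ico 0 τ := ⟨hr.1, hr.2.trans ht.2⟩
    have hdu : HasFDerivWithinAt u (fderivWithin ℝ u s (φ r)) s (φ r) :=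
      (hu.differentiableOn one_ne_zero _ ⟨trivial, hr'⟩).hasFDerivWithinAt
    have hcomp := hdu.comp_hasDerivWithinAt (s := Ico 0 τ) r (hφ r).hasDerivWithinAt
      fun _ hq => mk_mem_prod trivial hq
    have hsplit : ((v, 1) : E × ℝ) = (v - u (φ r), 0) + (u (φ r), 1) := by ext <;> simp
    rw [hsplit, map_add, hpde' _ ⟨trivial, hr'⟩, add_zero] at hcomp
    exact (hcomp.sub_const v).mono_of_mem_nhdsWithin
      (mem_of_superset (Ico_mem_nhdsGE hr'.2) (Ico_subset_Ico_left hr.1))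
  have hbound : ∀ r ∈ Ico 0 t,
      ‖fderivWithin ℝ u s (φ r) (v - u (φ r), 0)‖ ≤ K * ‖u (φ r) - v‖ := by
    intro r hr
    calc _ ≤ ‖fderivWithin ℝ u s (φ r)‖ * ‖((v - u (φ r), 0) : E × ℝ)‖ :=
          ContinuousLinearMap.le_opNorm _ _
      _ ≤ K * ‖u (φ r) - v‖ := by
        rw [Prod.norm_mk, norm_zero, max_eq_left (norm_nonneg _), norm_sub_rev]
        gcongr
        exact hK _ (mem_image_of_mem φ (Ico_subset_Icc_self hr))
  exact sub_eq_zero.mp <| eq_zero_of_abs_deriv_le_mul_abs_self_of_eq_zero_right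
    ((hu.continuousOn.comp (by fun_prop) hφs).sub continuousOn_const) hderiv (by simp [φ, v])
    hbound t ⟨ht.1, le_rfl⟩

end Transport

theorem stmt0_general (T : EReal)
    (u : (Fin 3 → ℝ) × ℝ → Fin 3 → ℝ)
    (hu : ContDiffOn ℝ 2 u {p : (Fin 3 → ℝ) × ℝ | 0 ≤ p.2 ∧ (p.2 : EReal) < T})
    (heq : ∀ (x : Fin 3 → ℝ) (t : ℝ), 0 ≤ t → (t : EReal) < T → ∀ i : Fin 3,
      deriv (fun s => u (x, s) i) t
        + ∑ j, u (x, t) j * fderiv ℝ (fun y => u (y, t) i) x (Pi.single j 1) = 0)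
    (ξ₀ : Fin 3 → ℝ) (w : Fin 3 → ℝ) (hw : w ≠ 0) (ℓ : ℝ) (hℓ : ℓ < 0)
    (heig : (spatialJacobian u ξ₀ 0).mulVec w = ℓ • w) :
    T ≤ ((-1 / ℓ : ℝ) : EReal) ∧ T < ⊤ := by
  suffices h : T ≤ ((-1 / ℓ : ℝ) : EReal) from ⟨h, h.trans_lt (EReal.coe_lt_top _)⟩
  by_contra! hlt
  obtain ⟨τ, hτ₁, hτT⟩ := EReal.lt_iff_exists_real_btwn.mp hlt
  set t₁ := -1 / ℓ
  have ht₁ : t₁ ∈ Ico 0 τ :=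
    ⟨div_nonneg_of_nonpos (by norm_num) hℓ.le, EReal.coe_lt_coe_iff.mp hτ₁⟩
  have hs : univ ×ˢ Ico 0 τ ⊆ {p : (Fin 3 → ℝ) × ℝ | 0 ≤ p.2 ∧ (p.2 : EReal) < T} :=
    fun p hp => ⟨hp.2.1, (EReal.coe_lt_coe_iff.mpr hp.2.2).trans hτT⟩
  have hu' : ContDiffOn ℝ 1 u (univ ×ˢ Ico 0 τ) := (hu.mono hs).of_le one_le_two
  have hdiff := hu'.differentiableOn one_ne_zero
  have hpde : ∀ p ∈ univ ×ˢ Ioo 0 τ, fderiv ℝ u p (u p, 1) = 0 := by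
    rintro ⟨x, t⟩ hp
    have hnhds : univ ×ˢ Ico 0 τ ∈ 𝓝 (x, t) := prod_mem_nhds univ_mem (Ico_mem_nhds hp.2.1 hp.2.2)
    funext i
    rw [← deriv_add_sum_mul_fderiv_eq (hdiff.differentiableAt hnhds).hasFDerivAt]
    exact heq x t hp.2.1.le (hs ⟨trivial, Ioo_subset_Ico_self hp.2⟩).2 i
  have h0 : (0 : ℝ) ∈ Ico 0 τ := left_mem_Ico.mpr (ht₁.1.trans_lt ht₁.2)
  have hA := ((hdiff (ξ₀, 0) ⟨trivial, h0⟩).differentiableAt_slice h0).hasFDerivAt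
  have hB := (hdiff (ξ₀ + t₁ • u (ξ₀, 0), t₁) ⟨trivial, ht₁⟩).differentiableAt_slice ht₁
  have hAw : fderiv ℝ (fun y => u (y, 0)) ξ₀ w = ℓ • w := by
    rw [← heig, spatialJacobian, ← hA.toMatrix'_eq, LinearMap.toMatrix'_mulVec]
    rfl
  have hflow := hA.apply_eq_fderiv_of_comp_add_smul_eq
    (fun x => apply_characteristic_eq_of_transport hu' hpde x ht₁) hB w
  rw [hAw, smul_smul, div_mul_cancel₀ (-1 : ℝ) hℓ.ne, neg_one_smul, add_neg_cancel,
    map_zero, smul_eq_zero] at hflow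
  exact hw (hflow.resolve_left hℓ.ne)

/-- If `u` is jointly `C²` on `ℝ³ × [0,T)` and solves `∂ₜu + (u·∇)u = 0` there, and the
spatial Jacobian `∇u(ξ₀,0)` has an eigenvector `w ≠ 0` with a negative eigenvalue `ℓ`,
then `T ≤ -1/ℓ`; in particular `T < +∞`. -/
theorem stmt0 (T : EReal) (hT : 0 < T)
    (u : (Fin 3 → ℝ) × ℝ → Fin 3 → ℝ)
    (hu : ContDiffOn ℝ 2 u {p : (Fin 3 → ℝ) × ℝ | 0 ≤ p.2 ∧ (p.2 : EReal) < T})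
    (heq : ∀ (x : Fin 3 → ℝ) (t : ℝ), 0 ≤ t → (t : EReal) < T → ∀ i : Fin 3,
      deriv (fun s => u (x, s) i) t
        + ∑ j, u (x, t) j * fderiv ℝ (fun y => u (y, t) i) x (Pi.single j 1) = 0)
    (ξ₀ : Fin 3 → ℝ) (w : Fin 3 → ℝ) (hw : w ≠ 0) (ℓ : ℝ) (hℓ : ℓ < 0)
    (heig : (spatialJacobian u ξ₀ 0).mulVec w = ℓ • w) :
    T ≤ ((-1 / ℓ : ℝ) : EReal) ∧ T < ⊤ :=
  stmt0_general T u hu heq ξ₀ w hw ℓ hℓ heig
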